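/- Layered-graph path correspondence: Given G with source s, levels Level(u) = d(s,u,G), and a sequence Y = (y_1,...,y_t) of positive integers, define the layered graph G_Y on t+1 copies V^0,...,V^t of V with: intra-layer edges (a^i,b^i) for each edge (a,b) of G with Level(b) − Level(a) = 1, and cross edges (a^{i−1}, b^i) for each edge (a,b) with 1 + Level(a) − Level(b) = y_i. Then for any vertex v and edge set F, there is an s-v path P in G−F with X^+(P) = Y if and only if there is a path from s^0 to v^t in G_Y minus all copies of edges of F. -/

import Mathlib

/-- `HasWalk E a b n` means there is a walk of length `n` from `a` to `b`. -/
inductive HasWalk {V : Type*} (E : V → V → Prop) : V → V → ℕ → Prop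
  | nil (a : V) : HasWalk E a a 0
  | cons {a b c : V} {n : ℕ} : E a b → HasWalk E b c n → HasWalk E a c (n + 1)

/-- A walk from `s` to `v`, given as its list of vertices. -/
def IsWalkFrom {V : Type*} (E : V → V → Prop) (s v : V) (p : List V) : Prop :=
  p.Chain' E ∧ p.head? = some s ∧ p.getLast? = some v

/-!
Along a shortest-path level function every edge `(a, b)` of `G` has `Level b ≤ Level a + 1`, so
its excess `1 + Level a - Level b` is nonnegative, and it vanishes exactly on the edges that
`G_Y` copies inside a layer. A walk therefore moves to the next layer precisely at the edges of
positive excess, and it can do so from layer `i - 1` only if that excess is `y_i`; reaching layer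
`t` means the positive excesses were `y_1, …, y_t` in order. Deleting every copy of an edge of
`F` from `G_Y` is the same as building the layered graph of `G - F` with the levels of `G`.
-/

open Relation

section

variable {V : Type*}

theorem HasWalk.snoc {E : V → V → Prop} {s a b : V} {n : ℕ}
    (h : HasWalk E s a n) (hab : E a b) : HasWalk E s b (n + 1) := by
  induction h with
  | nil a => exact .cons hab (.nil b)
  | cons h₁ _ ih => exact .cons h₁ (ih hab)

theorem level_le_level_add_one {E : V → V → Prop} {s : V} {Level : V → ℕ}
    (hLevel : ∀ u, IsLeast {n | HasWalk E s u n} (Level u)) {a b : V} (hab : E a b) :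
    Level b ≤ Level a + 1 :=
  (hLevel b).2 ((hLevel a).1.snoc hab)

section Walks

variable {R : V → V → Prop}

theorem isWalkFrom_cons_cons_iff {a c x b : V} {p : List V} :
    IsWalkFrom R a c (x :: b :: p) ↔ x = a ∧ R a b ∧ IsWalkFrom R b c (b :: p) := by
  refine ⟨fun ⟨hchain, hx, hc⟩ => ?_, fun ⟨hx, hab, hp, _, hc⟩ => ?_⟩
  · obtain ⟨hab, hp⟩ := List.isChain_cons_cons.1 hchain
    cases Option.some.inj hx
    exact ⟨rfl, hab, hp, rfl, by rwa [List.getLast?_cons_cons] at hc⟩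
  · subst hx
    exact ⟨List.isChain_cons_cons.2 ⟨hab, hp⟩, rfl, by rwa [List.getLast?_cons_cons]⟩

theorem exists_isWalkFrom_iff_reflTransGen (R : V → V → Prop) (s v : V) :
    (∃ p, IsWalkFrom R s v p) ↔ ReflTransGen R s v := by
  constructor
  · rintro ⟨p, hp, hs, hv⟩
    obtain ⟨p, rfl⟩ := List.head?_eq_some_iff.1 hs
    rw [List.getLast?_eq_some_getLast (List.cons_ne_nil _ _), Option.some.injEq] at hv
    exact List.relationReflTransGen_of_exists_isChain_cons p hp hv
  · intro h
    obtain ⟨p, hp, hv⟩ := List.exists_isChain_cons_of_relationReflTransGen h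
    exact ⟨s :: p, hp, rfl, by rw [List.getLast?_eq_some_getLast (List.cons_ne_nil _ _), hv]⟩

end Walks

def levelExcess (Level : V → ℕ) (a b : V) : ℤ := 1 + (Level a : ℤ) - Level b

/-- With `f = levelExcess Level` this is the sequence `X⁺(P)` of the walk `P = p`. -/
def posTrace (f : V → V → ℤ) (p : List V) : List ℤ :=
  ((p.zip p.tail).map fun ab => f ab.1 ab.2).filter fun y => decide (0 < y)

theorem posTrace_singleton (f : V → V → ℤ) (a : V) : posTrace f [a] = [] := rfl

theorem posTrace_cons_cons (f : V → V → ℤ) (a b : V) (p : List V) :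
    posTrace f (a :: b :: p) =
      if 0 < f a b then f a b :: posTrace f (b :: p) else posTrace f (b :: p) := by
  simp only [posTrace, List.tail_cons, List.zip_cons_cons, List.map_cons, List.filter_cons,
    decide_eq_true_eq]

inductive HasPosTrace (R : V → V → Prop) (f : V → V → ℤ) : V → V → List ℤ → Prop
  | nil (a : V) : HasPosTrace R f a a []
  | cons_nonpos {a b c : V} {l : List ℤ} :
      R a b → f a b ≤ 0 → HasPosTrace R f b c l → HasPosTrace R f a c l
  | cons_pos {a b c : V} {l : List ℤ} :
      R a b → 0 < f a b → HasPosTrace R f b c l → HasPosTrace R f a c (f a b :: l)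

section PosTrace

variable {R : V → V → Prop} {f : V → V → ℤ}

theorem hasPosTrace_of_isWalkFrom {a c : V} {p : List V} (hp : IsWalkFrom R a c p) :
    HasPosTrace R f a c (posTrace f p) := by
  induction p generalizing a with
  | nil => simp [IsWalkFrom] at hp
  | cons x p ih =>
    cases p with
    | nil =>
      obtain ⟨-, hx, hc⟩ := hp
      simp only [List.head?_cons, List.getLast?_singleton, Option.some.injEq] at hx hc
      subst hx hc
      exact .nil x
    | cons b p =>
      obtain ⟨rfl, hab, hp⟩ := isWalkFrom_cons_cons_iff.1 hp
      rw [posTrace_cons_cons]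
      split_ifs with hf
      · exact .cons_pos hab hf (ih hp)
      · exact .cons_nonpos hab (not_lt.1 hf) (ih hp)

theorem HasPosTrace.exists_isWalkFrom {a c : V} {l : List ℤ} (h : HasPosTrace R f a c l) :
    ∃ p, IsWalkFrom R a c p ∧ posTrace f p = l := by
  induction h with
  | nil a => exact ⟨[a], ⟨List.isChain_singleton a, rfl, rfl⟩, posTrace_singleton f a⟩
  | cons_nonpos hab hf _ ih =>
    obtain ⟨p, hp, rfl⟩ := ih
    obtain ⟨p, rfl⟩ := List.head?_eq_some_iff.1 hp.2.1
    refine ⟨_ :: _ :: p, isWalkFrom_cons_cons_iff.2 ⟨rfl, hab, hp⟩, ?_⟩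
    rw [posTrace_cons_cons, if_neg hf.not_gt]
  | cons_pos hab hf _ ih =>
    obtain ⟨p, hp, rfl⟩ := ih
    obtain ⟨p, rfl⟩ := List.head?_eq_some_iff.1 hp.2.1
    refine ⟨_ :: _ :: p, isWalkFrom_cons_cons_iff.2 ⟨rfl, hab, hp⟩, ?_⟩
    rw [posTrace_cons_cons, if_pos hf]

theorem exists_isWalkFrom_posTrace_eq_iff (R : V → V → Prop) (f : V → V → ℤ) (s v : V)
    (l : List ℤ) :
    (∃ p, IsWalkFrom R s v p ∧ posTrace f p = l) ↔ HasPosTrace R f s v l :=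
  ⟨fun ⟨_, hp, hl⟩ => hl ▸ hasPosTrace_of_isWalkFrom hp, HasPosTrace.exists_isWalkFrom⟩

end PosTrace

/-- The layered graph `G_Y` on `V × ℕ`, the copy `aⁱ` being `(a, i)`. The cross edges leaving
layer `i` use `Y[i]`, which is `y_{i+1}` in the paper's 1-based numbering. -/
def LayeredAdj (E : V → V → Prop) (Level : V → ℕ) (Y : List ℕ) (a b : V × ℕ) : Prop :=
  (a.2 = b.2 ∧ b.2 ≤ Y.length ∧ E a.1 b.1 ∧ Level b.1 = Level a.1 + 1) ∨
    (b.2 = a.2 + 1 ∧ E a.1 b.1 ∧ ∃ yi : ℕ, Y[a.2]? = some yi ∧ 1 + Level a.1 = Level b.1 + yi)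

theorem layeredAdj_deleteEdges (E : V → V → Prop) (F : Set (V × V)) (Level : V → ℕ)
    (Y : List ℕ) :
    LayeredAdj (fun a b => E a b ∧ (a, b) ∉ F) Level Y =
      fun a b => LayeredAdj E Level Y a b ∧ (a.1, b.1) ∉ F := by
  ext a b
  simp only [LayeredAdj]
  tauto

section Layered

variable {R : V → V → Prop} {Level : V → ℕ} {Y : List ℕ}

theorem HasPosTrace.reflTransGen_layeredAdj (hR : ∀ a b, R a b → Level b ≤ Level a + 1)
    {a w : V} {l : List ℤ} (h : HasPosTrace R (levelExcess Level) a w l) {i : ℕ}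
    (hi : i ≤ Y.length) (hl : l = (Y.drop i).map (↑)) :
    ReflTransGen (LayeredAdj R Level Y) (a, i) (w, Y.length) := by
  induction h generalizing i with
  | nil a =>
    have : Y.length ≤ i := List.drop_eq_nil_iff.1 (List.map_eq_nil_iff.1 hl.symm)
    obtain rfl := le_antisymm hi this
    exact .refl
  | @cons_nonpos a b _ _ hab hf _ ih =>
    have := hR _ _ hab
    unfold levelExcess at hf
    exact .head (b := (b, i))
      (Or.inl ⟨rfl, hi, hab, show Level b = Level a + 1 by omega⟩) (ih hi hl)
  | @cons_pos a b _ _ hab hf _ ih =>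
    have hlt : i < Y.length := by
      by_contra
      rw [List.drop_eq_nil_of_le (by omega)] at hl
      simp at hl
    rw [List.drop_eq_getElem_cons hlt, List.map_cons, List.cons.injEq] at hl
    obtain ⟨hexcess, hl⟩ := hl
    unfold levelExcess at hexcess
    exact .head (b := (b, i + 1)) (Or.inr ⟨rfl, hab, Y[i], List.getElem?_eq_getElem hlt,
      show 1 + Level a = Level b + Y[i] by omega⟩) (ih hlt hl)

theorem hasPosTrace_of_reflTransGen_layeredAdj (hY : ∀ y ∈ Y, 0 < y) {x : V × ℕ} {v : V}
    (h : ReflTransGen (LayeredAdj R Level Y) x (v, Y.length)) :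
    HasPosTrace R (levelExcess Level) x.1 v ((Y.drop x.2).map (↑)) := by
  induction h using ReflTransGen.head_induction_on with
  | refl => simpa using HasPosTrace.nil v
  | @head x y hxy _ ih =>
    rcases hxy with ⟨hi, -, hab, hlev⟩ | ⟨hi, hab, yi, hy, hlev⟩
    · rw [hi]
      exact .cons_nonpos hab (by unfold levelExcess; omega) ih
    · obtain ⟨hlt, rfl⟩ := List.getElem?_eq_some_iff.1 hy
      have hf : levelExcess Level x.1 y.1 = Y[x.2] := by unfold levelExcess; omega
      rw [List.drop_eq_getElem_cons hlt, List.map_cons, ← hf, ← hi]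
      exact .cons_pos hab (hf ▸ by exact_mod_cast hY _ (List.getElem_mem hlt)) ih

theorem hasPosTrace_iff_reflTransGen_layeredAdj (hR : ∀ a b, R a b → Level b ≤ Level a + 1)
    (hY : ∀ y ∈ Y, 0 < y) (s v : V) :
    HasPosTrace R (levelExcess Level) s v (Y.map (↑)) ↔
      ReflTransGen (LayeredAdj R Level Y) (s, 0) (v, Y.length) :=
  ⟨fun h => h.reflTransGen_layeredAdj hR (Nat.zero_le _) (by rw [List.drop_zero]),
    fun h => by simpa using hasPosTrace_of_reflTransGen_layeredAdj hY h⟩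

end Layered

end

/-- Layered-graph path correspondence: for a sequence `Y = (y_1, …, y_t)` of
positive integers, there is an `s`-`v` path `P` in `G - F` with `X⁺(P) = Y`
iff there is a path from `s⁰` to `vᵗ` in the layered graph `G_Y - φ⁻¹(F)`. -/
theorem stmt_15 {V : Type*} (E : V → V → Prop) (F : Set (V × V)) (s v : V)
    (Level : V → ℕ)
    (hLevel : ∀ u : V, IsLeast {n : ℕ | HasWalk E s u n} (Level u))
    (Y : List ℕ) (hY : ∀ y ∈ Y, 0 < y) :
    (∃ p : List V, IsWalkFrom (fun a b => E a b ∧ (a, b) ∉ F) s v p ∧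
        (((p.zip p.tail).map fun ab => 1 + (Level ab.1 : ℤ) - (Level ab.2 : ℤ)).filter
          fun y => decide (0 < y)) = Y.map (fun y => (y : ℤ)))
    ↔ (∃ q : List (V × ℕ), IsWalkFrom
        (fun a b =>
          ((a.2 = b.2 ∧ b.2 ≤ Y.length ∧ E a.1 b.1 ∧ Level b.1 = Level a.1 + 1) ∨
           (b.2 = a.2 + 1 ∧ E a.1 b.1 ∧ ∃ yi : ℕ, Y[a.2]? = some yi ∧
              1 + Level a.1 = Level b.1 + yi)) ∧ (a.1, b.1) ∉ F)
        (s, 0) (v, Y.length) q) := by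
  have hR : ∀ a b, E a b ∧ (a, b) ∉ F → Level b ≤ Level a + 1 :=
    fun _ _ hab => level_le_level_add_one hLevel hab.1
  have key := (exists_isWalkFrom_posTrace_eq_iff _ (levelExcess Level) s v _).trans <|
    (hasPosTrace_iff_reflTransGen_layeredAdj hR hY s v).trans
      (exists_isWalkFrom_iff_reflTransGen _ _ _).symm
  rw [layeredAdj_deleteEdges] at key
  -- `Y` is coerced to `List ℤ` through the list monad before `map` is applied.
  have hcast : (Y.map fun y => (y : ℤ)) = Y.map (Nat.cast : ℕ → ℤ) :=
    (List.map_id _).trans (List.flatMap_pure_eq_map _ Y)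
  rw [hcast]
  exact key
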